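/- arXiv:1304.7031 — 2 statements merged into one kernel-verified Lean document; each statement's English description precedes it below -/
import Mathlib

section
/- Continuity estimate for the Gaussian entropy functional (Lemma 2.1): Let N ≥ 1 and let ν = (ν₁,…,ν_N) and λ = (λ₁,…,λ_N) be vectors of reals, and let λ_* denote the minimum of all entries of ν and of λ; assume λ_* > 1. Then |Σ_{j=1}^N G(ν_j) − Σ_{j=1}^N G(λ_j)| ≤ (N/2)·( ‖ν−λ‖_∞·β(λ_*) + ‖ν−λ‖_∞² / (λ_*² − 1) ), where ‖ν−λ‖_∞ = max_{1≤j≤N} |ν_j − λ_j|. -/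
open scoped Classical ComplexOrder

noncomputable section

/-- The function `g(x) = (x+1)·log(x+1) − x·log x` (with `g 0 = 0` since `log 0 = 0`). -/
def gFn (x : ℝ) : ℝ := (x + 1) * Real.log (x + 1) - x * Real.log x

/-- Single-mode entropy as a function of the symplectic eigenvalue: `G(λ) = g((λ−1)/2)`. -/
def GFn (lam : ℝ) : ℝ := gFn ((lam - 1) / 2)

/-- Inverse temperature `β(λ) = log((λ+1)/(λ−1))`. -/
def betaFn (lam : ℝ) : ℝ := Real.log ((lam + 1) / (lam - 1))

/-- The standard symplectic form matrix on `ℝ^d` (for even `d = 2N` this is the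
block-diagonal matrix with `N` diagonal blocks `[[0,1],[-1,0]]`). -/
def Jmat (d : ℕ) : Matrix (Fin d) (Fin d) ℝ := fun i j =>
  if (i : ℕ) % 2 = 0 ∧ (j : ℕ) = (i : ℕ) + 1 then 1
  else if (j : ℕ) % 2 = 0 ∧ (i : ℕ) = (j : ℕ) + 1 then -1 else 0

/-- A real `d×d` matrix is symplectic if `S·J·Sᵀ = J`. -/
def IsSymplectic {d : ℕ} (S : Matrix (Fin d) (Fin d) ℝ) : Prop :=
  S * Jmat d * S.transpose = Jmat d

/-- The doubled diagonal matrix `D(λ) = diag(λ₀,λ₀,λ₁,λ₁,…)`. -/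
def Dmat (d : ℕ) (lam : ℕ → ℝ) : Matrix (Fin d) (Fin d) ℝ :=
  Matrix.diagonal fun i => lam ((i : ℕ) / 2)

/-- A valid quantum covariance matrix: `M` symmetric with `M + i·J ⪰ 0`. -/
def IsQCov {d : ℕ} (M : Matrix (Fin d) (Fin d) ℝ) : Prop :=
  M.IsSymm ∧
    (M.map (Complex.ofReal) + Complex.I • (Jmat d).map Complex.ofReal).PosSemidef

/-- Entropy functional `E(M) = Σⱼ G(λⱼ)` where `λⱼ` are the symplectic eigenvalues of `M`:
the eigenvalues of `i·J·M` are `±λⱼ`, so `E(M) = (1/2)·Σ_{μ root of charpoly} G(|Re μ|)`. -/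
def Ent {d : ℕ} (M : Matrix (Fin d) (Fin d) ℝ) : ℝ :=
  ((Matrix.charpoly (Complex.I • ((Jmat d * M).map Complex.ofReal))).roots.map
    fun μ => GFn |μ.re|).sum / 2

/-- The matrix `I_A ⊕ 0_B`: identity on the first `a` coordinates, zero on the rest. -/
def IA0B (d a : ℕ) : Matrix (Fin d) (Fin d) ℝ :=
  Matrix.diagonal fun i => if (i : ℕ) < a then 1 else 0

/-- Assemble a symmetric 2×2 block matrix `[[A, K], [Kᵀ, B]]`. -/
def assemble2 {a b : ℕ} (A : Matrix (Fin a) (Fin a) ℝ) (K : Matrix (Fin a) (Fin b) ℝ)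
    (B : Matrix (Fin b) (Fin b) ℝ) : Matrix (Fin (a + b)) (Fin (a + b)) ℝ := fun i j =>
  if hi : (i : ℕ) < a then
    if hj : (j : ℕ) < a then A ⟨i, hi⟩ ⟨j, hj⟩
    else K ⟨i, hi⟩ ⟨(j : ℕ) - a, by have := j.isLt; omega⟩
  else
    if hj : (j : ℕ) < a then K ⟨j, hj⟩ ⟨(i : ℕ) - a, by have := i.isLt; omega⟩
    else B ⟨(i : ℕ) - a, by have := i.isLt; omega⟩ ⟨(j : ℕ) - a, by have := j.isLt; omega⟩

/-- Assemble the symmetric 3×3 block matrix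
`[[Y, K₁, K₂], [K₁ᵀ, B₁, 0], [K₂ᵀ, 0, B₂]]`. -/
def assemble3 {a b c : ℕ} (Y : Matrix (Fin a) (Fin a) ℝ)
    (K₁ : Matrix (Fin a) (Fin b) ℝ) (K₂ : Matrix (Fin a) (Fin c) ℝ)
    (B₁ : Matrix (Fin b) (Fin b) ℝ) (B₂ : Matrix (Fin c) (Fin c) ℝ) :
    Matrix (Fin (a + b + c)) (Fin (a + b + c)) ℝ := fun i j =>
  if hi : (i : ℕ) < a then
    if hj : (j : ℕ) < a then Y ⟨i, hi⟩ ⟨j, hj⟩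
    else if hj' : (j : ℕ) < a + b then K₁ ⟨i, hi⟩ ⟨(j : ℕ) - a, by omega⟩
    else K₂ ⟨i, hi⟩ ⟨(j : ℕ) - a - b, by have := j.isLt; omega⟩
  else if hi' : (i : ℕ) < a + b then
    if hj : (j : ℕ) < a then K₁ ⟨j, hj⟩ ⟨(i : ℕ) - a, by omega⟩
    else if hj' : (j : ℕ) < a + b then
      B₁ ⟨(i : ℕ) - a, by omega⟩ ⟨(j : ℕ) - a, by omega⟩
    else 0
  else
    if hj : (j : ℕ) < a then K₂ ⟨j, hj⟩ ⟨(i : ℕ) - a - b, by have := i.isLt; omega⟩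
    else if hj' : (j : ℕ) < a + b then 0
    else B₂ ⟨(i : ℕ) - a - b, by have := i.isLt; omega⟩
      ⟨(j : ℕ) - a - b, by have := j.isLt; omega⟩


/- `G' = β / 2` on `(1, ∞)` and `β` is positive and decreasing there, so by the mean
value theorem each `G` is `β(λ_*)/2`-Lipschitz on `[λ_*, ∞)`; summing over the `N` modes gives
`|ΣG(ν_j) − ΣG(λ_j)| ≤ (N/2)·‖ν−λ‖_∞·β(λ_*)`, and the quadratic term is nonnegative slack. -/

open Real Set

lemma hasDerivAt_gFn {x : ℝ} (hx : 0 < x) : HasDerivAt gFn (log ((x + 1) / x)) x := by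
  have hshift : HasDerivAt (fun y => (y + 1) * log (y + 1)) (log (x + 1) + 1) x := by
    simpa using (hasDerivAt_mul_log (by linarith : x + 1 ≠ 0)).comp_add_const x 1
  refine (hshift.sub (hasDerivAt_mul_log hx.ne')).congr_deriv ?_
  rw [log_div (by linarith) hx.ne']
  ring

lemma hasDerivAt_GFn {x : ℝ} (hx : 1 < x) : HasDerivAt GFn (betaFn x / 2) x := by
  have hinner : HasDerivAt (fun y : ℝ => (y - 1) / 2) (1 / 2) x := by
    simpa using ((hasDerivAt_id x).sub_const 1).div_const 2
  refine ((hasDerivAt_gFn (by linarith : 0 < (x - 1) / 2)).comp x hinner).congr_deriv ?_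
  have hratio : ((x - 1) / 2 + 1) / ((x - 1) / 2) = (x + 1) / (x - 1) := by
    field_simp
    ring
  rw [hratio, betaFn]
  ring

lemma betaFn_pos {x : ℝ} (hx : 1 < x) : 0 < betaFn x :=
  log_pos <| (one_lt_div (by linarith)).2 (by linarith)

/- `(λ + 1)/(λ − 1) = 1 + 2/(λ − 1)` decreases on `(1, ∞)`. -/
lemma betaFn_antitoneOn : AntitoneOn betaFn (Ioi 1) := by
  intro x hx y hy hxy
  simp only [mem_Ioi] at hx hy
  apply log_le_log (div_pos (by linarith) (by linarith))
  rw [div_le_div_iff₀ (by linarith) (by linarith)]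
  nlinarith

lemma abs_GFn_sub_le {a u v : ℝ} (ha : 1 < a) (hu : a ≤ u) (hv : a ≤ v) :
    |GFn u - GFn v| ≤ betaFn a / 2 * |u - v| := by
  have hderiv : ∀ y ∈ Ici a, HasDerivWithinAt GFn (betaFn y / 2) (Ici a) y := fun y hy =>
    (hasDerivAt_GFn (ha.trans_le hy)).hasDerivWithinAt
  have hbound : ∀ y ∈ Ici a, ‖betaFn y / 2‖ ≤ betaFn a / 2 := by
    intro y hy
    have hy1 : 1 < y := ha.trans_le hy
    rw [Real.norm_eq_abs, abs_of_pos (half_pos (betaFn_pos hy1))]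
    exact div_le_div_of_nonneg_right (betaFn_antitoneOn (mem_Ioi.2 ha) (mem_Ioi.2 hy1) hy)
      zero_le_two
  simpa only [Real.norm_eq_abs] using
    (convex_Ici a).norm_image_sub_le_of_norm_hasDerivWithin_le hderiv hbound hv hu

lemma abs_sum_sub_sum_le_card_mul {ι : Type*} [Fintype ι] {f g : ι → ℝ} {c : ℝ}
    (h : ∀ i, |f i - g i| ≤ c) : |∑ i, f i - ∑ i, g i| ≤ Fintype.card ι * c := by
  rw [← Finset.sum_sub_distrib]
  refine (Finset.abs_sum_le_sum_abs _ _).trans ?_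
  simpa only [Finset.card_univ, nsmul_eq_mul] using
    Finset.sum_le_card_nsmul Finset.univ _ c fun i _ => h i

theorem entropy_continuity_general (N : ℕ) (nu lam : Fin N → ℝ)
    (lamStar d : ℝ)
    (hmin : IsLeast (Set.range nu ∪ Set.range lam) lamStar)
    (hstar : 1 < lamStar)
    (hd : IsGreatest (Set.range fun j => |nu j - lam j|) d) :
    |(∑ j, GFn (nu j)) - ∑ j, GFn (lam j)| ≤
      (N : ℝ) / 2 * (d * betaFn lamStar + d ^ 2 / (lamStar ^ 2 - 1)) := by
  have hbeta := betaFn_pos hstar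
  have hd_nonneg : 0 ≤ d := by
    obtain ⟨j, hj⟩ := hd.1
    exact hj ▸ abs_nonneg _
  have hmode : ∀ j, |GFn (nu j) - GFn (lam j)| ≤ betaFn lamStar / 2 * d := fun j =>
    (abs_GFn_sub_le hstar (hmin.2 (Or.inl ⟨j, rfl⟩)) (hmin.2 (Or.inr ⟨j, rfl⟩))).trans <|
      mul_le_mul_of_nonneg_left (hd.2 ⟨j, rfl⟩) (by positivity)
  have hslack : 0 ≤ d ^ 2 / (lamStar ^ 2 - 1) := by
    have : 0 < lamStar ^ 2 - 1 := by nlinarith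
    positivity
  calc |(∑ j, GFn (nu j)) - ∑ j, GFn (lam j)|
      ≤ N * (betaFn lamStar / 2 * d) := by
        simpa only [Fintype.card_fin] using abs_sum_sub_sum_le_card_mul hmode
    _ ≤ (N : ℝ) / 2 * (d * betaFn lamStar + d ^ 2 / (lamStar ^ 2 - 1)) := by
        have hN : (0 : ℝ) ≤ N := N.cast_nonneg
        nlinarith [mul_nonneg hN hslack]

/-- Continuity estimate for the Gaussian entropy functional (Lemma 2.1). -/
theorem entropy_continuity (N : ℕ) (hN : 1 ≤ N) (nu lam : Fin N → ℝ)
    (lamStar d : ℝ)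
    (hmin : IsLeast (Set.range nu ∪ Set.range lam) lamStar)
    (hstar : 1 < lamStar)
    (hd : IsGreatest (Set.range fun j => |nu j - lam j|) d) :
    |(∑ j, GFn (nu j)) - ∑ j, GFn (lam j)| ≤
      (N : ℝ) / 2 * (d * betaFn lamStar + d ^ 2 / (lamStar ^ 2 - 1)) :=
  entropy_continuity_general N nu lam lamStar d hmin hstar hd

end
end

section
/- Perturbation of the symplectic spectrum to zeroth order (Lemma 3.1): Let N ≥ 1 and let M be a real symmetric positive-semidefinite 2N×2N matrix. Then there exist constants C > 0 and ε₀ > 0 such that for every ε ∈ (0, ε₀), every symplectic eigenvalue λ of the positive-definite matrix I_{2N} + ε·M satisfies |λ − 1| ≤ C·ε. -/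
open scoped Classical ComplexOrder

noncomputable section

/-! The symplectic eigenvalues are monotone under the Loewner order: if `α • 1 ≤ A` and
`S A Sᵀ = D(λ)`, the rows `r = S₂ⱼ`, `s = S₂ⱼ₊₁` satisfy `r ⬝ᵥ J s = 1` and
`r ⬝ᵥ A r = s ⬝ᵥ A s = λⱼ`; as `J` is orthogonal, Cauchy–Schwarz gives `1 ≤ |r|² |s|²`, hence
`α² ≤ λⱼ²`. Applied to `A = 1 + εM ≥ 1` this gives `λⱼ ≥ 1`. The symplectic eigenvalues of
`A⁻¹` are the `λⱼ⁻¹` (diagonalized by `(Sᵀ)⁻¹`), and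
`A⁻¹ = 1 - εM + ε² M A⁻¹ M ≥ (1 - εc) • 1` when `M ≤ c • 1`, so `λⱼ⁻¹ ≥ 1 - εc`,
i.e. `λⱼ ≤ 1 + 2cε` once `εc < 1/2`. -/

open Matrix
open scoped MatrixOrder

def pairSwap {N : ℕ} (i : Fin (2 * N)) : Fin (2 * N) :=
  ⟨if (i : ℕ) % 2 = 0 then i + 1 else i - 1, by split_ifs <;> omega⟩

lemma val_pairSwap {N : ℕ} (i : Fin (2 * N)) :
    (pairSwap i : ℕ) = if (i : ℕ) % 2 = 0 then (i : ℕ) + 1 else (i : ℕ) - 1 := rfl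

lemma Jmat_apply_of_ne_pairSwap {N : ℕ} {i k : Fin (2 * N)} (h : k ≠ pairSwap i) :
    Jmat (2 * N) i k = 0 := by
  rw [Ne, Fin.ext_iff, val_pairSwap] at h
  unfold Jmat
  split_ifs at h ⊢ <;> first | rfl | omega

lemma Jmat_mul_self (N : ℕ) : Jmat (2 * N) * Jmat (2 * N) = -1 := by
  ext i k
  rw [mul_apply, Finset.sum_eq_single (pairSwap i)
    (fun m _ hm => by rw [Jmat_apply_of_ne_pairSwap hm, zero_mul]) (by simp), neg_apply,
    one_apply]
  simp only [Jmat, val_pairSwap, Fin.ext_iff]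
  split_ifs <;> first | omega | norm_num

lemma Jmat_transpose (d : ℕ) : (Jmat d)ᵀ = -Jmat d := by
  ext i k
  rw [transpose_apply, neg_apply]
  unfold Jmat
  split_ifs <;> first | omega | norm_num

lemma Jmat_inv (N : ℕ) : (Jmat (2 * N))⁻¹ = -Jmat (2 * N) :=
  inv_eq_right_inv (by rw [mul_neg, Jmat_mul_self, neg_neg])

lemma Jmat_mulVec_dotProduct_self (N : ℕ) (v : Fin (2 * N) → ℝ) :
    (Jmat (2 * N) *ᵥ v) ⬝ᵥ (Jmat (2 * N) *ᵥ v) = v ⬝ᵥ v := by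
  rw [dotProduct_mulVec, ← mulVec_transpose, mulVec_mulVec, Jmat_transpose, neg_mul,
    Jmat_mul_self, neg_neg, one_mulVec]

lemma IsSymplectic.transpose_inv {N : ℕ} {S : Matrix (Fin (2 * N)) (Fin (2 * N)) ℝ}
    (hS : IsSymplectic S) : IsSymplectic Sᵀ⁻¹ := by
  have h := congrArg Inv.inv hS
  rw [Matrix.mul_inv_rev, Matrix.mul_inv_rev, Jmat_inv, ← mul_assoc, mul_neg, neg_mul,
    neg_inj] at h
  rw [IsSymplectic, transpose_nonsing_inv, transpose_transpose, h]

lemma Dmat_inv {d : ℕ} {lam : ℕ → ℝ} (h : ∀ i : Fin d, lam (i / 2) ≠ 0) :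
    (Dmat d lam)⁻¹ = Dmat d lam⁻¹ :=
  inv_eq_right_inv (by
    rw [Dmat, Dmat, diagonal_mul_diagonal, ← diagonal_one]
    exact congrArg diagonal (funext fun i => mul_inv_cancel₀ (h i)))

lemma transpose_inv_mul_inv_mul_eq_Dmat_inv {d : ℕ} {A S : Matrix (Fin d) (Fin d) ℝ}
    {lam : ℕ → ℝ} (h : S * A * Sᵀ = Dmat d lam) (hlam : ∀ i : Fin d, lam (i / 2) ≠ 0) :
    Sᵀ⁻¹ * A⁻¹ * Sᵀ⁻¹ᵀ = Dmat d lam⁻¹ := by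
  rw [← Dmat_inv hlam, ← h, Matrix.mul_inv_rev, Matrix.mul_inv_rev, transpose_nonsing_inv,
    transpose_transpose, mul_assoc]

lemma dotProduct_sq_le {n : Type*} [Fintype n] (v w : n → ℝ) :
    (v ⬝ᵥ w) ^ 2 ≤ (v ⬝ᵥ v) * (w ⬝ᵥ w) := by
  simpa only [dotProduct, sq] using Finset.sum_mul_sq_le_sq_mul_sq Finset.univ v w

lemma mul_dotProduct_self_le_of_smul_one_le {n : Type*} [Fintype n] [DecidableEq n]
    {A : Matrix n n ℝ} {α : ℝ} (hA : α • 1 ≤ A) (v : n → ℝ) :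
    α * (v ⬝ᵥ v) ≤ v ⬝ᵥ A *ᵥ v := by
  have := (le_iff.mp hA).dotProduct_mulVec_nonneg v
  rw [star_trivial, sub_mulVec, dotProduct_sub, smul_mulVec, one_mulVec, dotProduct_smul,
    smul_eq_mul] at this
  linarith

lemma mul_mul_transpose_apply {n : Type*} [Fintype n] (S B : Matrix n n ℝ) (i k : n) :
    (S * B * Sᵀ) i k = S i ⬝ᵥ B *ᵥ S k := by
  rw [mul_mul_apply, transpose_transpose]

lemma le_of_smul_one_le_of_mul_mul_transpose_eq_Dmat {N : ℕ}
    {A S : Matrix (Fin (2 * N)) (Fin (2 * N)) ℝ} {lam : ℕ → ℝ} {α : ℝ} (hα : 0 ≤ α)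
    (hA : α • 1 ≤ A) (hS : IsSymplectic S) (hD : S * A * Sᵀ = Dmat (2 * N) lam)
    {j : ℕ} (hj : j < N) : α ≤ lam j := by
  have quad_eq (k : Fin (2 * N)) (hk : (k : ℕ) / 2 = j) : S k ⬝ᵥ A *ᵥ S k = lam j := by
    rw [← mul_mul_transpose_apply, hD, Dmat, diagonal_apply_eq, hk]
  have hr_eq := quad_eq ⟨2 * j, by omega⟩ (by dsimp only; omega)
  have hs_eq := quad_eq ⟨2 * j + 1, by omega⟩ (by dsimp only; omega)
  set r := S ⟨2 * j, by omega⟩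
  set s := S ⟨2 * j + 1, by omega⟩
  have hrs : r ⬝ᵥ (Jmat (2 * N) *ᵥ s) = 1 := by
    rw [← mul_mul_transpose_apply, hS, Jmat, if_pos ⟨Nat.mul_mod_right 2 j, rfl⟩]
  have cauchy_schwarz : 1 ≤ (r ⬝ᵥ r) * (s ⬝ᵥ s) := by
    have := dotProduct_sq_le r (Jmat (2 * N) *ᵥ s)
    rwa [hrs, Jmat_mulVec_dotProduct_self, one_pow] at this
  have hr : α * (r ⬝ᵥ r) ≤ lam j := hr_eq ▸ mul_dotProduct_self_le_of_smul_one_le hA r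
  have hs : α * (s ⬝ᵥ s) ≤ lam j := hs_eq ▸ mul_dotProduct_self_le_of_smul_one_le hA s
  have hr0 : 0 ≤ r ⬝ᵥ r := Finset.sum_nonneg fun i _ => mul_self_nonneg (r i)
  have hs0 : 0 ≤ s ⬝ᵥ s := Finset.sum_nonneg fun i _ => mul_self_nonneg (s i)
  have hlam0 : 0 ≤ lam j := (mul_nonneg hα hr0).trans hr
  have hsq : α ^ 2 ≤ lam j ^ 2 :=
    calc α ^ 2 ≤ α ^ 2 * ((r ⬝ᵥ r) * (s ⬝ᵥ s)) :=
          le_mul_of_one_le_right (sq_nonneg α) cauchy_schwarz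
      _ = (α * (r ⬝ᵥ r)) * (α * (s ⬝ᵥ s)) := by ring
      _ ≤ lam j * lam j := mul_le_mul hr hs (mul_nonneg hα hs0) hlam0
      _ = lam j ^ 2 := (sq _).symm
  exact (pow_le_pow_iff_left₀ hα hlam0 two_ne_zero).mp hsq

lemma Matrix.IsHermitian.exists_le_smul_one {n : Type*} [Fintype n] [DecidableEq n]
    {M : Matrix n n ℝ} (hM : M.IsHermitian) : ∃ c : ℝ, 0 < c ∧ M ≤ c • 1 := by
  obtain ⟨r, hr⟩ :=
    (hM.spectrum_real_eq_range_eigenvalues ▸ Set.finite_range hM.eigenvalues).bddAbove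
  refine ⟨max r 1, by positivity, ?_⟩
  rw [← Algebra.algebraMap_eq_smul_one]
  exact le_algebraMap_of_spectrum_le fun x hx => (hr hx).trans (le_max_left _ _)

lemma inv_one_add_smul_eq {n R : Type*} [Fintype n] [DecidableEq n] [CommRing R]
    (M : Matrix n n R) (ε : R) (h : IsUnit (1 + ε • M).det) :
    (1 + ε • M)⁻¹ = 1 - ε • M + ε ^ 2 • (M * (1 + ε • M)⁻¹ * M) := by
  set B := (1 + ε • M)⁻¹
  have hMB : ε • (M * B) = 1 - B := by
    have := mul_nonsing_inv _ h
    rw [add_mul, one_mul, smul_mul_assoc] at this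
    rw [← this, add_sub_cancel_left]
  have hBM : ε • (B * M) = 1 - B := by
    have := nonsing_inv_mul _ h
    rw [mul_add, mul_one, mul_smul_comm] at this
    rw [← this, add_sub_cancel_left]
  have hMBM : ε ^ 2 • (M * B * M) = ε • M - (1 - B) := by
    rw [sq, ← smul_smul, mul_assoc, ← mul_smul_comm, hBM, mul_sub, mul_one, smul_sub, hMB]
  rw [hMBM]
  abel

lemma smul_one_le_inv_one_add_smul {n : Type*} [Fintype n] [DecidableEq n]
    {M : Matrix n n ℝ} (hM : M.PosSemidef) {c ε : ℝ} (hMc : M ≤ c • 1) (hε : 0 ≤ ε) :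
    (1 - ε * c) • 1 ≤ (1 + ε • M)⁻¹ := by
  have hA : (1 + ε • M).PosDef := PosDef.one.add_posSemidef (hM.smul hε)
  have h₁ : (1 - ε * c) • 1 ≤ 1 - ε • M := by
    rw [le_iff]
    convert (le_iff.mp hMc).smul hε using 1
    simp only [sub_smul, one_smul, smul_sub, mul_smul]
    abel
  have h₂ : 1 - ε • M ≤ (1 + ε • M)⁻¹ := by
    rw [le_iff, inv_one_add_smul_eq M ε hA.det_pos.ne'.isUnit, add_sub_cancel_left]
    have := hA.inv.posSemidef.conjTranspose_mul_mul_same M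
    rw [hM.isHermitian.eq] at this
    exact this.smul (sq_nonneg ε)
  exact h₁.trans h₂

theorem symplectic_perturbation_zeroth_general (N : ℕ)
    (M : Matrix (Fin (2 * N)) (Fin (2 * N)) ℝ) (hM : M.PosSemidef) :
    ∃ C > (0 : ℝ), ∃ eps₀ > (0 : ℝ), ∀ eps : ℝ, 0 < eps → eps < eps₀ →
      (1 + eps • M).PosDef ∧
      ∀ (S : Matrix (Fin (2 * N)) (Fin (2 * N)) ℝ) (lam : ℕ → ℝ),
        IsSymplectic S → S * (1 + eps • M) * S.transpose = Dmat (2 * N) lam →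
        ∀ j < N, |lam j - 1| ≤ C * eps := by
  obtain ⟨c, hc, hMc⟩ := hM.isHermitian.exists_le_smul_one
  refine ⟨2 * c, by positivity, 1 / (2 * c), by positivity, fun ε hε hεc => ?_⟩
  refine ⟨PosDef.one.add_posSemidef (hM.smul hε.le), fun S lam hS hD j hj => ?_⟩
  have one_le_lam : ∀ j < N, 1 ≤ lam j := fun j hj =>
    le_of_smul_one_le_of_mul_mul_transpose_eq_Dmat zero_le_one
      (by rw [one_smul]; exact le_add_of_nonneg_right (hM.smul hε.le).nonneg) hS hD hj
  have hεc_half : ε * c < 1 / 2 := by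
    rw [lt_div_iff₀ (by positivity)] at hεc
    linarith
  have lam_ne_zero (i : Fin (2 * N)) : lam (i / 2) ≠ 0 :=
    (one_pos.trans_le (one_le_lam _ (by omega))).ne'
  have lam_inv_ge : 1 - ε * c ≤ (lam j)⁻¹ :=
    le_of_smul_one_le_of_mul_mul_transpose_eq_Dmat (by linarith)
      (smul_one_le_inv_one_add_smul hM hMc hε.le) hS.transpose_inv
      (transpose_inv_mul_inv_mul_eq_Dmat_inv hD lam_ne_zero) hj
  have hlam := one_le_lam j hj
  have hmul : (1 - ε * c) * lam j ≤ 1 := by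
    simpa [inv_mul_cancel₀ (by positivity : lam j ≠ 0)] using
      mul_le_mul_of_nonneg_right lam_inv_ge (by positivity : 0 ≤ lam j)
  rw [abs_of_nonneg (by linarith)]
  nlinarith

/-- Perturbation of the symplectic spectrum to zeroth order (Lemma 3.1). -/
theorem symplectic_perturbation_zeroth (N : ℕ) (hN : 1 ≤ N)
    (M : Matrix (Fin (2 * N)) (Fin (2 * N)) ℝ) (hM : M.PosSemidef) :
    ∃ C > (0 : ℝ), ∃ eps₀ > (0 : ℝ), ∀ eps : ℝ, 0 < eps → eps < eps₀ →
      (1 + eps • M).PosDef ∧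
      ∀ (S : Matrix (Fin (2 * N)) (Fin (2 * N)) ℝ) (lam : ℕ → ℝ),
        IsSymplectic S → S * (1 + eps • M) * S.transpose = Dmat (2 * N) lam →
        ∀ j < N, |lam j - 1| ≤ C * eps :=
  symplectic_perturbation_zeroth_general N M hM

end
end
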